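/- arXiv:1702.05610 — 2 statements merged into one kernel-verified Lean document; each statement's English description precedes it below -/
import Mathlib

section
/- Let (X_p)_p, indexed by the primes, be independent random variables on a probability space (Ω, P), each distributed according to the probability Haar measure on SU₂(ℂ). Then for every real σ with σ > 1/2, the series Σ_p Tr(X_p) p^{−σ} over the primes converges almost surely (its partial sums over primes p ≤ P converge as P → ∞). -/
open MeasureTheory ProbabilityTheory Filter

noncomputable section

/-- `SU₂(ℂ)`: the group of 2×2 complex unitary matrices of determinant 1. -/
abbrev SU2 := Matrix.specialUnitaryGroup (Fin 2) ℂ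

noncomputable instance : MeasurableSpace SU2 := borel SU2

instance : BorelSpace SU2 := ⟨rfl⟩

instance : Group SU2 :=
  { (inferInstance : Monoid SU2) with
    inv := fun A => ⟨star (A : Matrix (Fin 2) (Fin 2) ℂ), by
      obtain ⟨h1, h2⟩ := Matrix.mem_specialUnitaryGroup_iff.mp A.2
      refine Matrix.mem_specialUnitaryGroup_iff.mpr ⟨Unitary.star_mem h1, ?_⟩
      show Matrix.det (star (A : Matrix (Fin 2) (Fin 2) ℂ)) = 1
      rw [Matrix.star_eq_conjTranspose, Matrix.det_conjTranspose, h2, star_one]⟩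
    inv_mul_cancel := fun A => Subtype.ext (Unitary.star_mul_self_of_mem A.2.1) }

/-- The (real) trace of an element of `SU₂(ℂ)`; the trace of a unitary matrix with
determinant 1 is real, and we take its real part. -/
def rtr (x : SU2) : ℝ := (Matrix.trace (x : Matrix (Fin 2) (Fin 2) ℂ)).re

/-- The polynomial `U_ν` determined by `U_ν(2 cos θ) = sin((ν+1)θ)/sin θ`
(a rescaled Chebyshev polynomial of the second kind). -/
def chebU (ν : ℕ) (x : ℝ) : ℝ := (Polynomial.Chebyshev.U ℝ (ν : ℤ)).eval (x / 2)

/-- `Yn x n = ∏_{p^ν ∥ n} U_ν(Tr x_p)`, the product being over the prime powers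
exactly dividing `n`. -/
def Yn (x : ℕ → SU2) (n : ℕ) : ℝ :=
  ∏ p ∈ n.primeFactors, chebU (n.factorization p) (rtr (x p))

/-! Writing `q k` for the `k`-th prime, the summands `Y k = Tr(X_{q k}) (q k)^{-σ}` are independent
and centred: left translation by the central element `-1` of `SU₂(ℂ)` negates the trace, so its
Haar mean vanishes. Since `|Tr| ≤ 2`, their variances are at most `4 (q k)^{-2σ}`, which is
summable for `2σ > 1`. The partial sums of independent centred variables with summable variances
form a martingale bounded in `L²`, hence in `L¹`, so they converge almost surely by Doob's
theorem; the sum over primes `p ≤ N` is the partial sum up to `π(N)`. -/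

open scoped Topology
open Finset

theorem Nat.sum_filter_range_eq_sum_range_count {M : Type*} [AddCommMonoid M] (p : ℕ → Prop)
    [DecidablePred p] (f : ℕ → M) (n : ℕ) :
    ∑ k ∈ (range n).filter p, f k = ∑ i ∈ range (Nat.count p n), f (Nat.nth p i) := by
  induction n with
  | zero => simp
  | succ n ih =>
    rw [range_add_one, filter_insert, Nat.count_succ]
    split_ifs with h
    · rw [sum_insert (by simp), ih, sum_range_succ, Nat.nth_count h, add_comm]
    · simpa using ih

namespace ProbabilityTheory

variable {Ω : Type*} {mΩ : MeasurableSpace Ω} {P : Measure Ω}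

lemma eLpNorm_one_le_sqrt_variance [IsProbabilityMeasure P] {X : Ω → ℝ} (hX : MemLp X 2 P)
    (h0 : P[X] = 0) : eLpNorm X 1 P ≤ ENNReal.ofReal √(variance X P) := by
  have hsq : (∫ ω, |X ω| ∂P) ^ 2 ≤ variance X P := by
    have h := variance_nonneg |X| P
    rw [variance_eq_sub hX.abs] at h
    simp only [Pi.pow_apply, Pi.abs_apply, sq_abs] at h
    rw [variance_of_integral_eq_zero hX.aemeasurable h0]
    linarith
  rw [eLpNorm_one_eq_lintegral_enorm,
    ← ofReal_integral_norm_eq_lintegral_enorm (hX.integrable one_le_two)]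
  exact ENNReal.ofReal_le_ofReal (Real.le_sqrt_of_sq_le hsq)

variable {Y : ℕ → Ω → ℝ}

lemma iIndepFun.martingale_sum_range_succ (hind : iIndepFun Y P)
    (hmeas : ∀ n, StronglyMeasurable (Y n)) (hint : ∀ n, Integrable (Y n) P)
    (hmean : ∀ n, P[Y n] = 0) :
    Martingale (fun N ω => ∑ n ∈ range (N + 1), Y n ω) (Filtration.natural Y hmeas) P := by
  have := hind.isProbabilityMeasure
  refine martingale_of_condExp_sub_eq_zero_nat (fun N => ?_)
    (fun N => integrable_finsetSum _ fun n _ => hint n) (fun N => ?_)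
  · exact Finset.stronglyMeasurable_fun_sum _ fun n hn =>
      (Filtration.stronglyAdapted_natural hmeas n).mono
        ((Filtration.natural Y hmeas).mono (mem_range_succ_iff.mp hn))
  · have hinc : (fun ω => ∑ n ∈ range (N + 1 + 1), Y n ω) -
        (fun ω => ∑ n ∈ range (N + 1), Y n ω) = Y (N + 1) := by
      ext ω; simp [sum_range_succ _ (N + 1)]
    rw [hinc]
    exact (hind.condExp_natural_ae_eq_of_lt hmeas N.lt_succ_self).trans (by rw [hmean]; rfl)

lemma iIndepFun.variance_sum_range_le_tsum (hind : iIndepFun Y P) (hL2 : ∀ n, MemLp (Y n) 2 P)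
    (hvar : Summable fun n => variance (Y n) P) (N : ℕ) :
    variance (fun ω => ∑ n ∈ range N, Y n ω) P ≤ ∑' n, variance (Y n) P := by
  rw [← Finset.sum_fn,
    IndepFun.variance_sum (fun n _ => hL2 n) fun i _ j _ hij => hind.indepFun hij]
  exact hvar.sum_le_tsum _ fun n _ => variance_nonneg _ _

/-- Kolmogorov's one-series theorem. -/
theorem iIndepFun.ae_exists_tendsto_sum_range (hind : iIndepFun Y P)
    (hmeas : ∀ n, Measurable (Y n)) (hL2 : ∀ n, MemLp (Y n) 2 P) (hmean : ∀ n, P[Y n] = 0)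
    (hvar : Summable fun n => variance (Y n) P) :
    ∀ᵐ ω ∂P, ∃ l, Tendsto (fun N => ∑ n ∈ range N, Y n ω) atTop (𝓝 l) := by
  have := hind.isProbabilityMeasure
  have hmart := hind.martingale_sum_range_succ (fun n => (hmeas n).stronglyMeasurable)
    (fun n => (hL2 n).integrable one_le_two) hmean
  have hbdd (N : ℕ) : eLpNorm (fun ω => ∑ n ∈ range (N + 1), Y n ω) 1 P ≤
      (√(∑' n, variance (Y n) P)).toNNReal := by
    refine (eLpNorm_one_le_sqrt_variance (memLp_finsetSum _ fun n _ => hL2 n) ?_).trans ?_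
    · rw [integral_finsetSum _ fun n _ => (hL2 n).integrable one_le_two]
      exact sum_eq_zero fun n _ => hmean n
    · rw [ENNReal.ofReal]
      gcongr
      exact hind.variance_sum_range_le_tsum hL2 hvar _
  filter_upwards [hmart.submartingale.exists_ae_tendsto_of_bdd hbdd] with ω ⟨l, hl⟩
  exact ⟨l, (tendsto_add_atTop_iff_nat 1).mp hl⟩

end ProbabilityTheory

lemma continuous_rtr : Continuous rtr :=
  Complex.continuous_re.comp (continuous_subtype_val.matrix_trace)

lemma abs_rtr_le_two (x : SU2) : |rtr x| ≤ 2 := by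
  have hx := (Matrix.mem_specialUnitaryGroup_iff.mp x.2).1
  calc |rtr x| ≤ ‖Matrix.trace (x : Matrix (Fin 2) (Fin 2) ℂ)‖ := Complex.abs_re_le_norm _
    _ ≤ ‖(x : Matrix (Fin 2) (Fin 2) ℂ) 0 0‖ + ‖(x : Matrix (Fin 2) (Fin 2) ℂ) 1 1‖ := by
      rw [Matrix.trace_fin_two]; exact norm_add_le _ _
    _ ≤ 2 := by linarith [entry_norm_bound_of_unitary hx 0 0, entry_norm_bound_of_unitary hx 1 1]

lemma neg_one_mem_specialUnitaryGroup :
    (-1 : Matrix (Fin 2) (Fin 2) ℂ) ∈ Matrix.specialUnitaryGroup (Fin 2) ℂ := by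
  refine Matrix.mem_specialUnitaryGroup_iff.mpr ⟨?_, by simp [Matrix.det_neg]⟩
  constructor <;> simp

lemma integral_rtr_eq_zero (μ : Measure SU2) [μ.IsMulLeftInvariant] : ∫ x, rtr x ∂μ = 0 := by
  let g : SU2 := ⟨-1, neg_one_mem_specialUnitaryGroup⟩
  have hg (x : SU2) : rtr (g * x) = -rtr x := by
    simp [rtr, g, show ((g * x : SU2) : Matrix (Fin 2) (Fin 2) ℂ) = -x from neg_one_mul _]
  have h := integral_mul_left_eq_self rtr g (μ := μ)
  simp only [hg, integral_neg] at h
  linarith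

section RandomTrace

variable {Ω : Type*} {mΩ : MeasurableSpace Ω} {P : Measure Ω} {Z : Ω → SU2}

lemma memLp_rtr_comp [IsFiniteMeasure P] (hZ : Measurable Z) (p : ENNReal) :
    MemLp (fun ω => rtr (Z ω)) p P :=
  MemLp.of_bound (continuous_rtr.measurable.comp hZ).aestronglyMeasurable 2
    (ae_of_all _ fun ω => abs_rtr_le_two (Z ω))

lemma integral_rtr_comp_eq_zero (hZ : Measurable Z) {μ : Measure SU2} [μ.IsMulLeftInvariant]
    (hmap : P.map Z = μ) : ∫ ω, rtr (Z ω) ∂P = 0 := by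
  rw [← integral_map hZ.aemeasurable continuous_rtr.aestronglyMeasurable, hmap,
    integral_rtr_eq_zero]

lemma variance_rtr_comp_le_four [IsProbabilityMeasure P] (hZ : Measurable Z) :
    variance (fun ω => rtr (Z ω)) P ≤ 4 := by
  have h := variance_le_sq_of_bounded (μ := P) (a := -2) (b := 2)
    (ae_of_all _ fun ω => abs_le.mp (abs_rtr_le_two (Z ω)))
    (continuous_rtr.measurable.comp hZ).aemeasurable
  norm_num at h
  exact h

end RandomTrace

lemma summable_sq_rpow_neg {σ : ℝ} (hσ : 1 / 2 < σ) :
    Summable fun n : ℕ => ((n : ℝ) ^ (-σ)) ^ 2 := by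
  have h : Summable fun n : ℕ => (n : ℝ) ^ (-σ * 2) := Real.summable_nat_rpow.mpr (by linarith)
  simpa only [Real.rpow_mul (Nat.cast_nonneg _), Real.rpow_two] using h

theorem statement4_general
    {Ω : Type*} [MeasurableSpace Ω] (P : Measure Ω) [IsProbabilityMeasure P]
    (X : ℕ → Ω → SU2) (hXm : ∀ p, Measurable (X p))
    (hindep : iIndepFun (fun p : Nat.Primes => X p) P)
    (μ : Measure SU2) (hHaar : μ.IsHaarMeasure)
    (hdist : ∀ p : ℕ, p.Prime → Measure.map (X p) P = μ)
    (σ : ℝ) (hσ : 1 / 2 < σ) :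
    ∀ᵐ ω ∂P, ∃ l : ℝ,
      Tendsto (fun N : ℕ =>
          ∑ p ∈ (Finset.range (N + 1)).filter Nat.Prime, rtr (X p ω) * (p : ℝ) ^ (-σ))
        atTop (nhds l) := by
  have := hHaar
  set q : ℕ → ℕ := Nat.nth Nat.Prime
  have hq : q.Injective := Nat.nth_injective Nat.infinite_setOfPred_prime
  set Y : ℕ → Ω → ℝ := fun k ω => rtr (X (q k) ω) * (q k : ℝ) ^ (-σ)
  have hYm (k : ℕ) : Measurable (Y k) :=
    (continuous_rtr.measurable.comp (hXm _)).mul_const _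
  have hYind : iIndepFun Y P := by
    have hXq : iIndepFun (fun k => X (q k)) P :=
      hindep.precomp (g := fun k => ⟨q k, Nat.prime_nth_prime k⟩)
        fun i j h => hq (congrArg Subtype.val h)
    exact hXq.comp (fun k x => rtr x * (q k : ℝ) ^ (-σ))
      fun k => continuous_rtr.measurable.mul_const _
  have hYvar (k : ℕ) : variance (Y k) P ≤ 4 * ((q k : ℝ) ^ (-σ)) ^ 2 := by
    rw [variance_mul_const]
    exact mul_le_mul_of_nonneg_right (variance_rtr_comp_le_four (hXm _)) (sq_nonneg _)
  have hsum := hYind.ae_exists_tendsto_sum_range hYm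
    (fun k => (memLp_rtr_comp (P := P) (hXm _) 2).mul_const _)
    (fun k => by
      rw [integral_mul_const, integral_rtr_comp_eq_zero (hXm _) (hdist _ (Nat.prime_nth_prime k)),
        zero_mul])
    (((summable_sq_rpow_neg hσ).comp_injective hq).mul_left 4 |>.of_nonneg_of_le
      (fun k => variance_nonneg _ _) hYvar)
  filter_upwards [hsum] with ω ⟨l, hl⟩
  refine ⟨l, ?_⟩
  simp_rw [Nat.sum_filter_range_eq_sum_range_count]
  exact hl.comp (Nat.tendsto_primeCounting'.comp (tendsto_add_atTop_nat 1))

/-- If the `X_p` are independent and Haar-distributed on `SU₂(ℂ)`, then for `σ > 1/2`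
the series `Σ_p Tr(X_p) p^{-σ}` over primes converges almost surely. -/
theorem statement4
    {Ω : Type*} [MeasurableSpace Ω] (P : Measure Ω) [IsProbabilityMeasure P]
    (X : ℕ → Ω → SU2) (hXm : ∀ p, Measurable (X p))
    (hindep : iIndepFun (fun p : Nat.Primes => X p) P)
    (μ : Measure SU2) (hHaar : μ.IsHaarMeasure) (hμprob : IsProbabilityMeasure μ)
    (hdist : ∀ p : ℕ, p.Prime → Measure.map (X p) P = μ)
    (σ : ℝ) (hσ : 1 / 2 < σ) :
    ∀ᵐ ω ∂P, ∃ l : ℝ,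
      Tendsto (fun N : ℕ =>
          ∑ p ∈ (Finset.range (N + 1)).filter Nat.Prime, rtr (X p ω) * (p : ℝ) ^ (-σ))
        atTop (nhds l) :=
  statement4_general P X hXm hindep μ hHaar hdist σ hσ
end
end

section
/- Let (a_n)_{n≥1} be complex numbers and let σ₀ ∈ ℝ. Suppose the partial sums S(u) = Σ_{n≤u} a_n n^{−σ₀} converge to a limit as u → ∞ (in particular u ↦ S(u) is bounded). Then for every s ∈ ℂ with Re(s) > σ₀, the Dirichlet series Σ_{n≥1} a_n n^{−s} converges and one has Σ_{n≥1} a_n n^{−s} = (s − σ₀) ∫_1^∞ S(u) u^{−(s−σ₀+1)} du, the integral being absolutely convergent. -/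
/-!
Abel summation against the weight `t ^ (-(s - σ₀))` gives
`∑_{n ≤ N} a_n n^{-s} = N^{-(s-σ₀)} S(N) + (s - σ₀) ∫_1^N S(u) u^{-(s-σ₀+1)} du`.
Since `S` converges it is bounded, so the boundary term tends to `0` and the integrand is
`O(u^{-(Re s - σ₀) - 1})`, hence integrable on `[1, ∞)`. The same argument works as soon as
`S(N) = O(N^r)` with `0 ≤ r < Re s - σ₀`.
-/

open MeasureTheory ProbabilityTheory Filter

noncomputable section

open Finset Asymptotics Topology

theorem sum_Icc_zero_mul_update_zero {R : Type*} [NonUnitalNonAssocSemiring R] (g c : ℕ → R)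
    (n : ℕ) :
    ∑ k ∈ Icc 0 n, g k * Function.update c 0 0 k = ∑ k ∈ Icc 1 n, g k * c k := by
  rw [← insert_Icc_add_one_left_eq_Icc n.zero_le, sum_insert (by simp), Function.update_self,
    mul_zero, zero_add]
  exact sum_congr rfl fun k hk ↦ by
    rw [Function.update_of_ne (Nat.one_le_iff_ne_zero.mp (mem_Icc.mp hk).1)]

section

variable {c : ℕ → ℂ} {r : ℝ}

theorem isBigO_sum_Icc_floor (hr : 0 ≤ r)
    (hO : (fun n ↦ ∑ k ∈ Icc 1 n, c k) =O[atTop] fun n ↦ (n : ℝ) ^ r) :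
    (fun t : ℝ ↦ ∑ k ∈ Icc 1 ⌊t⌋₊, c k) =O[atTop] fun t ↦ t ^ r :=
  (hO.comp_tendsto tendsto_nat_floor_atTop).trans <|
    isEquivalent_nat_floor.isBigO.rpow hr (eventually_ge_atTop 0)

theorem isBigO_mul_sum_Icc_floor (hr : 0 ≤ r)
    (hO : (fun n ↦ ∑ k ∈ Icc 1 n, c k) =O[atTop] fun n ↦ (n : ℝ) ^ r)
    {f : ℝ → ℂ} {a : ℝ} (hf : f =O[atTop] fun t ↦ t ^ a) :
    (fun t : ℝ ↦ f t * ∑ k ∈ Icc 1 ⌊t⌋₊, c k) =O[atTop] fun t ↦ t ^ (a + r) :=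
  hf.mul_atTop_rpow_of_isBigO_rpow _ _ _ (isBigO_sum_Icc_floor hr hO) le_rfl

theorem isBigO_cpow_mul_sum_Icc_floor (hr : 0 ≤ r)
    (hO : (fun n ↦ ∑ k ∈ Icc 1 n, c k) =O[atTop] fun n ↦ (n : ℝ) ^ r) (w : ℂ) :
    (fun t : ℝ ↦ (t : ℂ) ^ w * ∑ k ∈ Icc 1 ⌊t⌋₊, c k) =O[atTop] fun t ↦ t ^ (w.re + r) :=
  isBigO_mul_sum_Icc_floor hr hO <|
    isBigO_norm_left.mp (Complex.norm_ofReal_cpow_eventually_eq_atTop w).isBigO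

theorem integrableOn_sum_Icc_floor_mul_cpow (hr : 0 ≤ r)
    (hO : (fun n ↦ ∑ k ∈ Icc 1 n, c k) =O[atTop] fun n ↦ (n : ℝ) ^ r) {w : ℂ}
    (hw : w.re + r < -1) :
    IntegrableOn (fun t : ℝ ↦ (∑ k ∈ Icc 1 ⌊t⌋₊, c k) * (t : ℂ) ^ w) (Set.Ici 1) := by
  have hloc : LocallyIntegrableOn (fun t : ℝ ↦ (t : ℂ) ^ w) (Set.Ici 1) :=
    ContinuousOn.locallyIntegrableOn (fun t ht ↦ (Complex.continuousAt_ofReal_cpow_const t w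
      (Or.inr (zero_lt_one.trans_le ht).ne')).continuousWithinAt) measurableSet_Ici
  simp_rw [mul_comm (∑ k ∈ Icc 1 _, c k)]
  exact (locallyIntegrableOn_mul_sum_Icc c zero_le_one hloc).integrableOn_of_isBigO_atTop
    (isBigO_cpow_mul_sum_Icc_floor hr hO w) (integrableAtFilter_rpow_atTop_iff.mpr hw)

theorem tendsto_cpow_mul_sum_Icc_floor (hr : 0 ≤ r)
    (hO : (fun n ↦ ∑ k ∈ Icc 1 n, c k) =O[atTop] fun n ↦ (n : ℝ) ^ r) {w : ℂ}
    (hw : w.re + r < 0) :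
    Tendsto (fun t : ℝ ↦ (t : ℂ) ^ w * ∑ k ∈ Icc 1 ⌊t⌋₊, c k) atTop (𝓝 0) :=
  (isBigO_cpow_mul_sum_Icc_floor hr hO w).trans_tendsto <| by
    simpa using tendsto_rpow_neg_atTop (neg_pos.mpr hw)

theorem tendsto_sum_Icc_mul_cpow_neg (hr : 0 ≤ r)
    (hO : (fun n ↦ ∑ k ∈ Icc 1 n, c k) =O[atTop] fun n ↦ (n : ℝ) ^ r) {z : ℂ}
    (hz : r < z.re) :
    Tendsto (fun N : ℕ ↦ ∑ n ∈ Icc 1 N, c n * (n : ℂ) ^ (-z)) atTop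
      (𝓝 (z * ∫ t in Set.Ioi (1 : ℝ), (∑ k ∈ Icc 1 ⌊t⌋₊, c k) * (t : ℂ) ^ (-(z + 1)))) := by
  set f : ℝ → ℂ := fun t ↦ (t : ℂ) ^ (-z)
  have hz0 : -z ≠ 0 := neg_ne_zero.mpr (Complex.ne_zero_of_re_pos (hr.trans_lt hz))
  have hderiv (t : ℝ) (ht : 0 < t) : deriv f t = -z * (t : ℂ) ^ (-(z + 1)) := by
    rw [Complex.deriv_ofReal_cpow_const ht.ne' hz0, neg_add', sub_eq_add_neg]
  -- Mathlib's Abel summation sums from `0` and needs a vanishing zeroth coefficient.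
  have hpartial (n : ℕ) : ∑ k ∈ Icc 0 n, Function.update c 0 0 k = ∑ k ∈ Icc 1 n, c k := by
    simpa using sum_Icc_zero_mul_update_zero 1 c n
  have hf_int : LocallyIntegrableOn (deriv f) (Set.Ici 1) :=
    ((integrableOn_Ici_iff_integrableOn_Ioi (by simp)).mpr
      (integrableOn_Ioi_deriv_ofReal_cpow zero_lt_one
        (by simpa using hr.trans_lt hz))).locallyIntegrableOn
  have hdom : (fun t ↦ deriv f t * ∑ k ∈ Icc 0 ⌊t⌋₊, Function.update c 0 0 k) =O[atTop]
      fun t ↦ t ^ ((-z).re - 1 + r) := by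
    simp_rw [hpartial]
    exact isBigO_mul_sum_Icc_floor hr hO (isBigO_deriv_ofReal_cpow_const_atTop (-z))
  have hlim : Tendsto (fun n : ℕ ↦ f n * ∑ k ∈ Icc 0 n, Function.update c 0 0 k) atTop (𝓝 0) := by
    have := (tendsto_cpow_mul_sum_Icc_floor hr hO (w := -z) (by simpa using hz)).comp
      tendsto_natCast_atTop_atTop
    simpa [f, hpartial, Function.comp_def, Nat.floor_natCast] using this
  have key := tendsto_sum_mul_atTop_nhds_one_sub_integral₀ (Function.update c 0 0) (f := f)
    (Function.update_self ..)
    (fun t ht ↦ differentiableAt_id.ofReal_cpow_const (zero_lt_one.trans_le ht).ne' hz0)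
    hf_int hlim hdom (integrableAtFilter_rpow_atTop_iff.mpr (by rw [Complex.neg_re]; linarith))
  convert key using 2 with N
  · rw [sum_Icc_zero_mul_update_zero]
    exact sum_congr rfl fun n _ ↦ by simp [f, mul_comm]
  · rw [zero_sub, ← integral_neg, ← integral_const_mul]
    refine setIntegral_congr_fun measurableSet_Ioi fun t ht ↦ ?_
    rw [hpartial, hderiv t (zero_lt_one.trans ht)]
    ring

end

/-- Summation by parts for Dirichlet series: if the partial sums
`S(u) = Σ_{n ≤ u} a_n n^{-σ₀}` converge as `u → ∞`, then for `Re(s) > σ₀` the Dirichlet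
series `Σ_n a_n n^{-s}` converges and equals `(s - σ₀) ∫_1^∞ S(u) u^{-(s-σ₀+1)} du`,
the integral being absolutely convergent. -/
theorem statement11 (a : ℕ → ℂ) (σ₀ : ℝ)
    (hconv : ∃ l : ℂ,
      Tendsto (fun u : ℝ => ∑ n ∈ Finset.Icc 1 ⌊u⌋₊, a n * (n : ℂ) ^ (-(σ₀ : ℂ)))
        atTop (nhds l))
    (s : ℂ) (hs : σ₀ < s.re) :
    IntegrableOn
      (fun u : ℝ =>
        (∑ n ∈ Finset.Icc 1 ⌊u⌋₊, a n * (n : ℂ) ^ (-(σ₀ : ℂ))) * (u : ℂ) ^ (-(s - σ₀ + 1)))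
      (Set.Ici (1 : ℝ)) ∧
    Tendsto (fun N : ℕ => ∑ n ∈ Finset.Icc 1 N, a n * (n : ℂ) ^ (-s)) atTop
      (nhds ((s - σ₀) * ∫ u in Set.Ici (1 : ℝ),
        (∑ n ∈ Finset.Icc 1 ⌊u⌋₊, a n * (n : ℂ) ^ (-(σ₀ : ℂ))) * (u : ℂ) ^ (-(s - σ₀ + 1)))) := by
  obtain ⟨l, hl⟩ := hconv
  have hO : (fun N ↦ ∑ n ∈ Icc 1 N, a n * (n : ℂ) ^ (-(σ₀ : ℂ))) =O[atTop]
      fun N ↦ (N : ℝ) ^ (0 : ℝ) := by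
    simpa [Function.comp_def] using (hl.comp tendsto_natCast_atTop_atTop).isBigO_one ℝ
  have hz : (0 : ℝ) < (s - σ₀).re := by simpa using hs
  refine ⟨integrableOn_sum_Icc_floor_mul_cpow le_rfl hO (by simpa using hs), ?_⟩
  rw [integral_Ici_eq_integral_Ioi]
  refine (tendsto_sum_Icc_mul_cpow_neg le_rfl hO hz).congr fun N ↦ sum_congr rfl fun n hn ↦ ?_
  have hn0 : (n : ℂ) ≠ 0 := Nat.cast_ne_zero.mpr (Nat.one_le_iff_ne_zero.mp (mem_Icc.mp hn).1)
  rw [mul_assoc, ← Complex.cpow_add _ _ hn0]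
  congr 2
  ring
end
end
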